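/- (CS decomposition, square case) Let n = p + q with p ≥ q. Any n×n real orthogonal matrix Q can be factored as Q = diag(O_p, O_q) · M · diag(O_p', O_q'), where O_p, O_p' ∈ O(p), O_q, O_q' ∈ O(q), and M is the block matrix [[C, 0, S], [0, I_{p−q}, 0], [−S, 0, C]] with C = diag(cos θ_l), S = diag(sin θ_l) for angles θ_1, …, θ_q ∈ [0, π/2]. -/

import Mathlib

/-!
Write `Q = [[A, B], [C, D]]` with `D` the lower-right `q × q` block; orthogonality gives
`BᵀB + DᵀD = 1`. Diagonalize `DᵀD = V diag(λ) Vᵀ`. The columns of `DV` and of `BV` are then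
pairwise orthogonal with squared lengths `λ` and `1 - λ`, so completing their normalizations to
orthonormal bases gives orthogonal `U₁, U₂` with `DV = U₂ cos θ` and `BV = U₁ [sin θ; 0]`, where
`cos θ = √λ`. Now `diag(U₁, U₂)ᵀ Q diag(1, V)` and the CS matrix `M(θ)` are orthogonal matrices
with the same last block column, so `M(θ)ᵀ diag(U₁, U₂)ᵀ Q diag(1, V)` is orthogonal and fixes
the last `q` basis vectors; such a matrix is `diag(X, 1)` with `X` orthogonal.
-/

open Matrix

namespace Matrix

variable {m n R : Type*} [Fintype m] [Fintype n] [DecidableEq m] [DecidableEq n]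

section CommRing

variable [CommRing R]

theorem transpose_mul_self_mul_eq_one {A B : Matrix n n R} (hA : Aᵀ * A = 1)
    (hB : Bᵀ * B = 1) : (A * B)ᵀ * (A * B) = 1 := by
  rw [transpose_mul, Matrix.mul_assoc, ← Matrix.mul_assoc Aᵀ, hA, Matrix.one_mul, hB]

omit [DecidableEq m] [DecidableEq n] in
theorem fromBlocks_zero_transpose_mul_self (A : Matrix m m R) (D : Matrix n n R) :
    (fromBlocks A 0 0 D)ᵀ * fromBlocks A 0 0 D = fromBlocks (Aᵀ * A) 0 0 (Dᵀ * D) := by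
  simp [fromBlocks_transpose, fromBlocks_multiply]

theorem eq_fromBlocks_of_mul_fromRows_zero_one {Y : Matrix (m ⊕ n) (m ⊕ n) R}
    (hY : Yᵀ * Y = 1) (hYE : Y * (fromRows 0 1 : Matrix (m ⊕ n) n R) = fromRows 0 1) :
    Y = fromBlocks Y.toBlocks₁₁ 0 0 1 := by
  have hYtE : Yᵀ * (fromRows 0 1 : Matrix (m ⊕ n) n R) = fromRows 0 1 := by
    conv_lhs => rw [← hYE]
    rw [← Matrix.mul_assoc, hY, Matrix.one_mul]
  rw [← fromBlocks_toBlocks Y] at hYE hYtE ⊢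
  simp only [fromBlocks_transpose, fromBlocks_mul_fromRows, Matrix.mul_zero, Matrix.mul_one,
    zero_add] at hYE hYtE
  obtain ⟨h₁₂, h₂₂⟩ := fromRows_inj hYE
  obtain ⟨h₂₁, -⟩ := fromRows_inj hYtE
  rw [toBlocks_fromBlocks₁₁, h₁₂, h₂₂, ← transpose_eq_zero.mp h₂₁]

theorem exists_eq_mul_fromBlocks_of_mul_fromRows_eq {W M : Matrix (m ⊕ n) (m ⊕ n) R}
    (hW : Wᵀ * W = 1) (hM : Mᵀ * M = 1)
    (h : W * (fromRows 0 1 : Matrix (m ⊕ n) n R) = M * (fromRows 0 1 : Matrix (m ⊕ n) n R)) :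
    ∃ X : Matrix m m R, Xᵀ * X = 1 ∧ W = M * fromBlocks X 0 0 1 := by
  have hM' : M * Mᵀ = 1 := mul_eq_one_comm.mp hM
  set Y := Mᵀ * W
  have hY : Yᵀ * Y = 1 := transpose_mul_self_mul_eq_one (by rwa [transpose_transpose]) hW
  have hYE : Y * (fromRows 0 1 : Matrix (m ⊕ n) n R) = fromRows 0 1 := by
    rw [Matrix.mul_assoc, h, ← Matrix.mul_assoc, hM, Matrix.one_mul]
  have hY_eq := eq_fromBlocks_of_mul_fromRows_zero_one hY hYE
  refine ⟨Y.toBlocks₁₁, ?_, ?_⟩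
  · rw [hY_eq, fromBlocks_zero_transpose_mul_self, ← fromBlocks_one] at hY
    exact (fromBlocks_inj.mp hY).1
  · rw [← hY_eq, ← Matrix.mul_assoc, hM', Matrix.one_mul]

end CommRing

omit [Fintype n] [DecidableEq m] in
theorem diagonal_nonneg_of_transpose_mul_self_eq {E : Matrix m n ℝ} {d : n → ℝ}
    (h : Eᵀ * E = diagonal d) (j : n) : 0 ≤ d j := by
  have hjj := congrFun (congrFun h j) j
  rw [diagonal_apply_eq, mul_apply] at hjj
  exact hjj ▸ Finset.sum_nonneg fun i _ => mul_self_nonneg (E i j)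

omit [Fintype n] in
theorem exists_orthogonal_eq_mul_of_transpose_mul_self_eq_diagonal (E : Matrix m n ℝ)
    {f : n → m} (hf : Function.Injective f) {d : n → ℝ} (h : Eᵀ * E = diagonal d) :
    ∃ U : Matrix m m ℝ, Uᵀ * U = 1 ∧
      E = U * of fun i j => if i = f j then √(d j) else 0 := by
  classical
  let col : n → EuclideanSpace ℝ m := fun j => WithLp.toLp 2 fun i => E i j
  have inner_col (j k : n) : inner ℝ (col j) (col k) = diagonal d j k := by
    rw [← h]
    simp [col, mul_apply, PiLp.inner_apply, mul_comm]
  have hd := diagonal_nonneg_of_transpose_mul_self_eq h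
  let v : m → EuclideanSpace ℝ m := Function.extend f (fun j => (√(d j))⁻¹ • col j) 0
  have hv (j : n) : v (f j) = (√(d j))⁻¹ • col j := hf.extend_apply _ _ j
  have hv_orthonormal : Orthonormal ℝ ((f '' {j | d j ≠ 0}).domRestrict v) := by
    rw [orthonormal_iff_ite]
    rintro ⟨_, j, hj, rfl⟩ ⟨_, k, hk, rfl⟩
    simp only [Set.domRestrict_apply, hv, real_inner_smul_left, real_inner_smul_right, inner_col]
    rcases eq_or_ne j k with rfl | hjk
    · have : 0 < d j := (hd j).lt_of_ne' hj
      field_simp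
      simp [Real.sq_sqrt (hd j)]
    · simp [hjk, Subtype.ext_iff, hf.ne hjk]
  obtain ⟨b, hb⟩ :=
    hv_orthonormal.exists_orthonormalBasis_extension_of_card_eq finrank_euclideanSpace
  refine ⟨of fun i k => b k i, ?_, ?_⟩
  · ext k k'
    simpa [mul_apply, one_apply, PiLp.inner_apply, mul_comm] using
      orthonormal_iff_ite.mp b.orthonormal k k'
  · ext i j
    simp only [mul_apply, of_apply, mul_ite, mul_zero, Finset.sum_ite_eq', Finset.mem_univ,
      if_true]
    rcases eq_or_ne (d j) 0 with hdj | hdj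
    · have hcol : col j = 0 := inner_self_eq_zero.mp (by rw [inner_col, diagonal_apply_eq, hdj])
      simpa [hdj, col] using congr_fun (congrArg WithLp.ofLp hcol) i
    · have : 0 < d j := (hd j).lt_of_ne' hdj
      rw [hb _ ⟨j, hdj, rfl⟩, hv]
      simp only [PiLp.smul_apply, smul_eq_mul, col]
      field_simp

theorem IsSymm.exists_orthogonal_transpose_mul_mul_eq_diagonal {S : Matrix n n ℝ}
    (hS : S.IsSymm) : ∃ V : Matrix n n ℝ, Vᵀ * V = 1 ∧ ∃ d : n → ℝ, Vᵀ * S * V = diagonal d := by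
  have hH : S.IsHermitian := isHermitian_iff_isSymm.mpr hS
  have hV := hH.eigenvectorUnitary.2
  rw [Unitary.mem_iff, star_eq_conjTranspose, conjTranspose_eq_transpose_of_trivial] at hV
  refine ⟨hH.eigenvectorUnitary, hV.1, hH.eigenvalues, ?_⟩
  simpa [star_eq_conjTranspose, conjTranspose_eq_transpose_of_trivial] using
    hH.conjStarAlgAut_star_eigenvectorUnitary

variable {k : Type*} [Fintype k] [DecidableEq k]

theorem exists_cs_of_transpose_mul_self_add_eq_one (B : Matrix (n ⊕ k) n ℝ) (D : Matrix n n ℝ)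
    (h : Bᵀ * B + Dᵀ * D = 1) :
    ∃ (U₁ : Matrix (n ⊕ k) (n ⊕ k) ℝ) (U₂ V : Matrix n n ℝ) (θ : n → ℝ),
      U₁ᵀ * U₁ = 1 ∧ U₂ᵀ * U₂ = 1 ∧ Vᵀ * V = 1 ∧ (∀ l, θ l ∈ Set.Icc 0 (Real.pi / 2)) ∧
      B * V = U₁ * (fromRows (diagonal fun l => Real.sin (θ l)) 0 : Matrix (n ⊕ k) n ℝ) ∧
      D * V = U₂ * diagonal fun l => Real.cos (θ l) := by
  obtain ⟨V, hV, d, hd⟩ :=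
    IsSymm.exists_orthogonal_transpose_mul_mul_eq_diagonal (isSymm_transpose_mul_self D)
  have hDV : (D * V)ᵀ * (D * V) = diagonal d := by
    rw [← hd, transpose_mul]
    simp only [Matrix.mul_assoc]
  have hBV : (B * V)ᵀ * (B * V) = diagonal fun l => 1 - d l := by
    rw [transpose_mul, Matrix.mul_assoc, ← Matrix.mul_assoc Bᵀ, eq_sub_of_add_eq h,
      Matrix.sub_mul, Matrix.mul_sub, Matrix.one_mul, hV, ← Matrix.mul_assoc, hd,
      ← diagonal_one, diagonal_sub]
  have hd₀ := diagonal_nonneg_of_transpose_mul_self_eq hDV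
  have hd₁ := diagonal_nonneg_of_transpose_mul_self_eq hBV
  obtain ⟨U₂, hU₂, hDU⟩ :=
    exists_orthogonal_eq_mul_of_transpose_mul_self_eq_diagonal _ Function.injective_id hDV
  obtain ⟨U₁, hU₁, hBU⟩ :=
    exists_orthogonal_eq_mul_of_transpose_mul_self_eq_diagonal _ Sum.inl_injective hBV
  have hcos (l : n) : Real.cos (Real.arccos √(d l)) = √(d l) :=
    Real.cos_arccos (by linarith [Real.sqrt_nonneg (d l)])
      (Real.sqrt_le_one.mpr (by linarith [hd₁ l]))
  have hsin (l : n) : Real.sin (Real.arccos √(d l)) = √(1 - d l) := by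
    rw [Real.sin_arccos, Real.sq_sqrt (hd₀ l)]
  refine ⟨U₁, U₂, V, fun l => Real.arccos √(d l), hU₁, hU₂, hV,
    fun l => ⟨Real.arccos_nonneg _, Real.arccos_le_pi_div_two.mpr (Real.sqrt_nonneg _)⟩, ?_, ?_⟩
  · rw [hBU]
    congr 1
    ext (i | i) j
    · rcases eq_or_ne i j with rfl | hij
      · simp [hsin]
      · simp [hij]
    · simp
  · rw [hDU]
    congr 1
    ext i j
    rcases eq_or_ne i j with rfl | hij
    · simp [hcos]
    · simp [hij]

variable (k)

/-- The middle factor `[[C, 0, S], [0, I, 0], [-S, 0, C]]` of the CS decomposition. -/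
noncomputable def csMatrix (θ : n → ℝ) : Matrix ((n ⊕ k) ⊕ n) ((n ⊕ k) ⊕ n) ℝ :=
  fromBlocks (fromBlocks (diagonal fun l => Real.cos (θ l)) 0 0 1)
    (fromRows (diagonal fun l => Real.sin (θ l)) 0)
    (fromCols (-diagonal fun l => Real.sin (θ l)) 0) (diagonal fun l => Real.cos (θ l))

theorem csMatrix_transpose_mul_self (θ : n → ℝ) : (csMatrix k θ)ᵀ * csMatrix k θ = 1 := by
  simp only [csMatrix, fromBlocks_transpose, fromBlocks_multiply, transpose_fromRows,
    transpose_fromCols, fromCols_mul_fromRows, fromBlocks_mul_fromRows, fromCols_mul_fromBlocks,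
    fromRows_mul, mul_fromCols, diagonal_transpose, transpose_neg, transpose_zero, transpose_one]
  ext ((i | i) | i) ((j | j) | j) <;> simp [diagonal_apply, one_apply] <;> split_ifs <;>
    first | linear_combination Real.cos_sq_add_sin_sq (θ i) | ring

theorem csMatrix_mul_fromRows_zero_one (θ : n → ℝ) :
    csMatrix k θ * (fromRows 0 1 : Matrix ((n ⊕ k) ⊕ n) n ℝ) =
      fromRows (fromRows (diagonal fun l => Real.sin (θ l)) 0)
        (diagonal fun l => Real.cos (θ l)) := by
  simp [csMatrix, fromBlocks_mul_fromRows]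

theorem exists_cs_decomposition (Q : Matrix ((n ⊕ k) ⊕ n) ((n ⊕ k) ⊕ n) ℝ)
    (hQ : Qᵀ * Q = 1) :
    ∃ (U₁ X : Matrix (n ⊕ k) (n ⊕ k) ℝ) (U₂ V : Matrix n n ℝ) (θ : n → ℝ),
      U₁ᵀ * U₁ = 1 ∧ Xᵀ * X = 1 ∧ U₂ᵀ * U₂ = 1 ∧ Vᵀ * V = 1 ∧
      (∀ l, θ l ∈ Set.Icc 0 (Real.pi / 2)) ∧
      Q = fromBlocks U₁ 0 0 U₂ * csMatrix k θ * fromBlocks X 0 0 V := by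
  obtain ⟨A, B, C, D, rfl⟩ : ∃ A B C D, Q = fromBlocks A B C D :=
    ⟨_, _, _, _, (fromBlocks_toBlocks Q).symm⟩
  have hBD : Bᵀ * B + Dᵀ * D = 1 := by
    rw [fromBlocks_transpose, fromBlocks_multiply, ← fromBlocks_one, fromBlocks_inj] at hQ
    exact hQ.2.2.2
  obtain ⟨U₁, U₂, V, θ, hU₁, hU₂, hV, hθ, hBV, hDV⟩ :=
    exists_cs_of_transpose_mul_self_add_eq_one B D hBD
  set L := fromBlocks U₁ 0 0 U₂
  set R : Matrix ((n ⊕ k) ⊕ n) ((n ⊕ k) ⊕ n) ℝ := fromBlocks 1 0 0 V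
  have hL : L * Lᵀ = 1 :=
    mul_eq_one_comm.mp (by simp [L, fromBlocks_zero_transpose_mul_self, hU₁, hU₂])
  have hR : R * Rᵀ = 1 := mul_eq_one_comm.mp (by simp [R, fromBlocks_zero_transpose_mul_self, hV])
  set W := Lᵀ * fromBlocks A B C D * R
  have hW : Wᵀ * W = 1 :=
    transpose_mul_self_mul_eq_one
      (transpose_mul_self_mul_eq_one (by rwa [transpose_transpose]) hQ) (mul_eq_one_comm.mp hR)
  have hW_col : W * (fromRows 0 1 : Matrix ((n ⊕ k) ⊕ n) n ℝ) =
      csMatrix k θ * (fromRows 0 1 : Matrix ((n ⊕ k) ⊕ n) n ℝ) := by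
    rw [csMatrix_mul_fromRows_zero_one]
    simp only [W, L, R, Matrix.mul_assoc, fromBlocks_transpose, fromBlocks_mul_fromRows]
    simp [hBV, hDV, ← Matrix.mul_assoc, hU₁, hU₂]
  obtain ⟨X, hX, hWX⟩ :=
    exists_eq_mul_fromBlocks_of_mul_fromRows_eq hW (csMatrix_transpose_mul_self k θ) hW_col
  refine ⟨U₁, X, U₂, Vᵀ, θ, hU₁, hX, hU₂, by simpa using mul_eq_one_comm.mp hV, hθ, ?_⟩
  calc fromBlocks A B C D = L * W * Rᵀ := by
        simp only [W, ← Matrix.mul_assoc, hL, Matrix.one_mul]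
        rw [Matrix.mul_assoc, hR, Matrix.mul_one]
    _ = L * csMatrix k θ * fromBlocks X 0 0 Vᵀ := by
        rw [hWX, Matrix.mul_assoc L, Matrix.mul_assoc, Matrix.mul_assoc]
        simp [R, fromBlocks_transpose, fromBlocks_multiply]

end Matrix

theorem cs_decomposition (p q : ℕ)
    (Q : Matrix ((Fin q ⊕ Fin (p - q)) ⊕ Fin q) ((Fin q ⊕ Fin (p - q)) ⊕ Fin q) ℝ)
    (hQ : Qᵀ * Q = 1) :
    ∃ (Op Op' : Matrix (Fin q ⊕ Fin (p - q)) (Fin q ⊕ Fin (p - q)) ℝ)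
      (Oq Oq' : Matrix (Fin q) (Fin q) ℝ) (θ : Fin q → ℝ),
      Opᵀ * Op = 1 ∧ Op'ᵀ * Op' = 1 ∧ Oqᵀ * Oq = 1 ∧ Oq'ᵀ * Oq' = 1 ∧
      (∀ l, θ l ∈ Set.Icc 0 (Real.pi / 2)) ∧
      Q = Matrix.fromBlocks Op 0 0 Oq *
          Matrix.fromBlocks
            (Matrix.fromBlocks (Matrix.diagonal fun l => Real.cos (θ l)) 0 0 1)
            (Matrix.of fun i j => match i with
              | Sum.inl i' => if i' = j then Real.sin (θ j) else 0
              | Sum.inr _ => 0)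
            (Matrix.of fun i j => match j with
              | Sum.inl j' => if i = j' then -Real.sin (θ i) else 0
              | Sum.inr _ => 0)
            (Matrix.diagonal fun l => Real.cos (θ l)) *
          Matrix.fromBlocks Op' 0 0 Oq' := by
  obtain ⟨U₁, X, U₂, V, θ, hU₁, hX, hU₂, hV, hθ, hQ_eq⟩ := exists_cs_decomposition _ Q hQ
  refine ⟨U₁, X, U₂, V, θ, hU₁, hX, hU₂, hV, hθ, hQ_eq.trans ?_⟩
  congr 2
  rw [csMatrix]
  congr 1
  · ext (i | i) j
    · rcases eq_or_ne i j with rfl | hij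
      · simp
      · simp [hij]
    · simp
  · ext i (j | j)
    · rcases eq_or_ne i j with rfl | hij
      · simp
      · simp [hij]
    · simp
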